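/- A bounded linear operator T on H = L²(ℝ, μ) commutes with the orthogonal projections onto S_t⁺ and onto S_t⁻ for every t ∈ ℝ if and only if every vector e_q (q ∈ ℚ) is an eigenvector of T, i.e., for each q ∈ ℚ there exists c ∈ ℂ with T e_q = c • e_q. (This identifies the commutant of the nest 𝒩₁ with the algebra of operators diagonal with respect to the atomic basis.) -/

import Mathlib

open MeasureTheory

/-- The closed subspace of `L²(ν)` of functions vanishing `ν`-a.e. on the set `s`. -/
noncomputable def vanishOn (ν : Measure ℝ) (s : Set ℝ) : Submodule ℂ (Lp ℂ 2 ν) where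
  carrier := {f | (f : ℝ → ℂ) =ᵐ[ν.restrict s] 0}
  add_mem' := by
    intro f g hf hg
    filter_upwards [hf, hg, ae_restrict_of_ae (Lp.coeFn_add f g)] with x hfx hgx hx
    show (↑↑(f + g) : ℝ → ℂ) x = 0
    rw [hx]
    simp only [Pi.add_apply]
    simp [hfx, hgx]
  zero_mem' := by
    filter_upwards [ae_restrict_of_ae (Lp.coeFn_zero ℂ 2 ν)] with x hx
    show (↑↑(0 : Lp ℂ 2 ν) : ℝ → ℂ) x = 0
    simpa using hx
  smul_mem' := by
    intro c f hf
    filter_upwards [hf, ae_restrict_of_ae (Lp.coeFn_smul c f)] with x hfx hx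
    show (↑↑(c • f) : ℝ → ℂ) x = 0
    rw [hx]
    simp [hfx]

/-- The measure `μ = ∑_{q ∈ ℚ} δ_q` on the Borel σ-algebra of `ℝ`. -/
noncomputable def mu : Measure ℝ := Measure.sum fun q : ℚ => Measure.dirac (q : ℝ)

lemma mu_singleton_ne_top (x : ℝ) : mu {x} ≠ ⊤ := by
  have h : mu {x} = ∑' q : ℚ, Measure.dirac (q : ℝ) {x} :=
    Measure.sum_apply _ (measurableSet_singleton x)
  rw [h]
  by_cases hx : ∃ q : ℚ, (q : ℝ) = x
  · obtain ⟨q₀, hq₀⟩ := hx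
    have hs : ∀ q : ℚ, q ≠ q₀ → Measure.dirac (q : ℝ) {x} = 0 := by
      intro q hq
      rw [Measure.dirac_apply]
      have : (q : ℝ) ≠ x := by
        intro h'
        exact hq (by exact_mod_cast hq₀ ▸ h')
      simp [Set.indicator, this]
    rw [tsum_eq_single q₀ hs, Measure.dirac_apply]
    simp [Set.indicator, hq₀]
  · have hs : ∀ q : ℚ, Measure.dirac (q : ℝ) {x} = 0 := by
      intro q
      rw [Measure.dirac_apply]
      have : (q : ℝ) ≠ x := fun h' => hx ⟨q, h'⟩
      simp [Set.indicator, this]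
    simp [hs]

/-- `e q` is the indicator function of the singleton `{q}` as an element of `H = L²(ℝ, μ)`. -/
noncomputable def e (q : ℚ) : Lp ℂ 2 mu :=
  indicatorConstLp 2 (measurableSet_singleton (q : ℝ)) (mu_singleton_ne_top _) (1 : ℂ)

/-- The subspace `S_t⁺ = {f ∈ L²(μ) : f = 0 μ-a.e. on (t, ∞)}`. -/
noncomputable def Splus (t : ℝ) : Submodule ℂ (Lp ℂ 2 mu) := vanishOn mu (Set.Ioi t)

/-- The subspace `S_t⁻ = {f ∈ L²(μ) : f = 0 μ-a.e. on [t, ∞)}`. -/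
noncomputable def Sminus (t : ℝ) : Submodule ℂ (Lp ℂ 2 mu) := vanishOn mu (Set.Ici t)

/-- The subspace `N_t = {f ∈ L²(λ) : f = 0 λ-a.e. on (t, ∞)}` of `K = L²(ℝ, λ)`,
where `λ` is Lebesgue measure. -/
noncomputable def Nt (t : ℝ) : Submodule ℂ (Lp ℂ 2 (volume : Measure ℝ)) :=
  vanishOn volume (Set.Ioi t)

/-! An operator commutes with the orthogonal projection onto `K` iff it leaves `K` and `Kᗮ`
invariant. In `L²(μ)` the orthogonal complement of the functions vanishing on `s` is the space of
functions vanishing off `s`, so `T (e q)`, like `e q`, vanishes on `(q, ∞)` (from `S_q⁺`) and on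
`(-∞, q)` (from `(S_q⁻)ᗮ`), hence is a multiple of `e q`. Conversely a diagonal `T` acts by
pointwise multiplication, which preserves every space of functions vanishing on a set. -/

open scoped InnerProductSpace ComplexConjugate

section OrthogonalProjection

variable {𝕜 E : Type*} [RCLike 𝕜] [NormedAddCommGroup E] [InnerProductSpace 𝕜 E]
  {K : Submodule 𝕜 E} {P : E →L[𝕜] E}

lemma eq_of_mem_of_sub_mem_orthogonal {f g₁ g₂ : E} (h₁ : g₁ ∈ K) (h₁' : f - g₁ ∈ Kᗮ)
    (h₂ : g₂ ∈ K) (h₂' : f - g₂ ∈ Kᗮ) : g₁ = g₂ := by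
  have hK : g₁ - g₂ ∈ K := K.sub_mem h₁ h₂
  have hKperp : g₁ - g₂ ∈ Kᗮ := by simpa using Kᗮ.sub_mem h₂' h₁'
  exact sub_eq_zero.1 (Submodule.disjoint_def.1 K.orthogonal_disjoint _ hK hKperp)

variable (hP : ∀ f, P f ∈ K ∧ f - P f ∈ Kᗮ)
include hP

lemma apply_eq_self_of_mem {f : E} (hf : f ∈ K) : P f = f :=
  eq_of_mem_of_sub_mem_orthogonal (hP f).1 (hP f).2 hf (by simp)

lemma apply_eq_zero_of_mem_orthogonal {f : E} (hf : f ∈ Kᗮ) : P f = 0 :=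
  eq_of_mem_of_sub_mem_orthogonal (hP f).1 (hP f).2 K.zero_mem (by simpa using hf)

lemma comp_eq_comp_iff_mapsTo (T : E →L[𝕜] E) :
    T.comp P = P.comp T ↔ Set.MapsTo T K K ∧ Set.MapsTo T Kᗮ Kᗮ := by
  constructor
  · intro hTP
    have hTP' : ∀ f, T (P f) = P (T f) := fun f => congr($hTP f)
    refine ⟨fun f hf => ?_, fun f hf => ?_⟩
    · rw [← apply_eq_self_of_mem hP hf, hTP']
      exact (hP _).1
    · have h := (hP (T f)).2
      rwa [← hTP', apply_eq_zero_of_mem_orthogonal hP hf, map_zero, sub_zero] at h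
  · rintro ⟨hK, hKperp⟩
    ext f
    refine eq_of_mem_of_sub_mem_orthogonal (f := T f) (hK (hP f).1) ?_ (hP (T f)).1 (hP (T f)).2
    rw [ContinuousLinearMap.comp_apply, ← map_sub]
    exact hKperp (hP f).2

end OrthogonalProjection

lemma ae_mu_iff {p : ℝ → Prop} : (∀ᵐ x ∂mu, p x) ↔ ∀ q : ℚ, p q := by
  simp only [mu, Measure.ae_sum_iff, ae_dirac_eq, Filter.eventually_pure]

lemma mu_coe_singleton (q : ℚ) : mu {(q : ℝ)} = 1 := by
  rw [mu, Measure.sum_apply _ (measurableSet_singleton _), tsum_eq_single q]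
  · simp
  · intro p hp
    simp [Measure.dirac_apply', hp]

lemma Lp.ext_mu {E : Type*} [NormedAddCommGroup E] {p : ENNReal} {f g : Lp E p mu}
    (h : ∀ q : ℚ, (f : ℝ → E) q = (g : ℝ → E) q) : f = g :=
  Lp.ext (ae_mu_iff.2 h)

lemma Lp.smul_apply_mu (c : ℂ) (f : Lp ℂ 2 mu) (q : ℚ) :
    ((c • f : Lp ℂ 2 mu) : ℝ → ℂ) q = c * (f : ℝ → ℂ) q :=
  ae_mu_iff.1 (Lp.coeFn_smul c f) q

lemma e_apply (p q : ℚ) : (e p : ℝ → ℂ) q = if q = p then 1 else 0 := by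
  rw [e, ae_mu_iff.1 indicatorConstLp_coeFn q]
  simp [Set.indicator_apply]

lemma inner_e (p : ℚ) (f : Lp ℂ 2 mu) : ⟪e p, f⟫_ℂ = (f : ℝ → ℂ) p := by
  rw [e, L2.inner_indicatorConstLp_one, integral_singleton, measureReal_def, mu_coe_singleton]
  simp

lemma mem_vanishOn_mu_iff {s : Set ℝ} (hs : MeasurableSet s) (f : Lp ℂ 2 mu) :
    f ∈ vanishOn mu s ↔ ∀ q : ℚ, (q : ℝ) ∈ s → (f : ℝ → ℂ) q = 0 :=
  (ae_restrict_iff' hs).trans ae_mu_iff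

lemma e_mem_vanishOn {s : Set ℝ} (hs : MeasurableSet s) {q : ℚ} (hq : (q : ℝ) ∉ s) :
    e q ∈ vanishOn mu s := by
  rw [mem_vanishOn_mu_iff hs]
  rintro p hp
  rw [e_apply, if_neg]
  rintro rfl
  exact hq hp

lemma orthogonal_vanishOn_mu {s : Set ℝ} (hs : MeasurableSet s) :
    (vanishOn mu s)ᗮ = vanishOn mu sᶜ := by
  ext f
  rw [mem_vanishOn_mu_iff hs.compl, Submodule.mem_orthogonal]
  constructor
  · intro hf q hq
    rw [← inner_e]
    exact hf _ (e_mem_vanishOn hs hq)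
  · intro hf g hg
    rw [L2.inner_def, integral_eq_zero_of_ae (ae_mu_iff.2 fun q => ?_)]
    by_cases hq : (q : ℝ) ∈ s
    · simp [(mem_vanishOn_mu_iff hs g).1 hg q hq]
    · simp [hf q hq]

lemma eq_smul_e_of_apply_eq_zero {f : Lp ℂ 2 mu} {q : ℚ}
    (hf : ∀ p : ℚ, p ≠ q → (f : ℝ → ℂ) p = 0) : f = (f : ℝ → ℂ) q • e q := by
  refine Lp.ext_mu fun p => ?_
  rw [Lp.smul_apply_mu, e_apply]
  by_cases hpq : p = q
  · simp [hpq]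
  · simp [hpq, hf p hpq]

section Diagonal

variable {T : Lp ℂ 2 mu →L[ℂ] Lp ℂ 2 mu} {c : ℚ → ℂ} (hT : ∀ q, T (e q) = c q • e q)
include hT

/-- Read off from the adjoint: `T† e_p = conj c_p • e_p`, so `(T f)(p) = ⟪T† e_p, f⟫ = c_p f(p)`. -/
lemma apply_eq_mul_of_apply_e (f : Lp ℂ 2 mu) (p : ℚ) :
    (T f : ℝ → ℂ) p = c p * (f : ℝ → ℂ) p := by
  have hadj : ContinuousLinearMap.adjoint T (e p) = conj (c p) • e p := by
    refine Lp.ext_mu fun q => ?_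
    rw [Lp.smul_apply_mu, ← inner_e, ContinuousLinearMap.adjoint_inner_right, hT,
      inner_smul_left, inner_e, e_apply]
    by_cases hqp : q = p <;> simp [hqp]
  rw [← inner_e, ← ContinuousLinearMap.adjoint_inner_left, hadj, inner_smul_left, inner_e,
    RCLike.conj_conj]

lemma mapsTo_vanishOn_of_apply_e {s : Set ℝ} (hs : MeasurableSet s) :
    Set.MapsTo T (vanishOn mu s) (vanishOn mu s) := by
  intro f hf
  rw [SetLike.mem_coe, mem_vanishOn_mu_iff hs] at hf ⊢
  intro q hq
  rw [apply_eq_mul_of_apply_e hT, hf q hq, mul_zero]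

end Diagonal

/-- A bounded operator `T` on `H = L²(ℝ, μ)` commutes with the orthogonal projections
onto `S_t⁺` and `S_t⁻` for every `t` iff every `e_q` (`q ∈ ℚ`) is an eigenvector of `T`.
Here `Pp t` (resp. `Pm t`) is the orthogonal projection onto `S_t⁺` (resp. `S_t⁻`),
characterized by the property that it maps every `f` into the subspace with
`f - P f` orthogonal to the subspace. -/
theorem commutant_of_nest_one_iff_diagonal
    (Pp Pm : ℝ → (Lp ℂ 2 mu →L[ℂ] Lp ℂ 2 mu))
    (hPp : ∀ t f, Pp t f ∈ Splus t ∧ f - Pp t f ∈ (Splus t)ᗮ)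
    (hPm : ∀ t f, Pm t f ∈ Sminus t ∧ f - Pm t f ∈ (Sminus t)ᗮ)
    (T : Lp ℂ 2 mu →L[ℂ] Lp ℂ 2 mu) :
    ((∀ t : ℝ, T.comp (Pp t) = (Pp t).comp T) ∧
        (∀ t : ℝ, T.comp (Pm t) = (Pm t).comp T)) ↔
      ∀ q : ℚ, ∃ c : ℂ, T (e q) = c • e q := by
  simp only [comp_eq_comp_iff_mapsTo (hPp _), comp_eq_comp_iff_mapsTo (hPm _), Splus, Sminus,
    orthogonal_vanishOn_mu measurableSet_Ioi, orthogonal_vanishOn_mu measurableSet_Ici]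
  constructor
  · rintro ⟨hp, hm⟩ q
    have hright := (hp q).1 (e_mem_vanishOn (q := q) measurableSet_Ioi (by simp))
    have hleft := (hm q).2 (e_mem_vanishOn (q := q) measurableSet_Ici.compl (by simp))
    rw [SetLike.mem_coe, mem_vanishOn_mu_iff measurableSet_Ioi] at hright
    rw [SetLike.mem_coe, mem_vanishOn_mu_iff measurableSet_Ici.compl] at hleft
    refine ⟨_, eq_smul_e_of_apply_eq_zero fun p hpq => ?_⟩
    rcases lt_or_gt_of_ne hpq with hlt | hgt
    · exact hleft p (by simpa using hlt)
    · exact hright p (by simpa using hgt)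
  · intro h
    choose c hc using h
    exact ⟨fun t => ⟨mapsTo_vanishOn_of_apply_e hc measurableSet_Ioi,
        mapsTo_vanishOn_of_apply_e hc measurableSet_Ioi.compl⟩,
      fun t => ⟨mapsTo_vanishOn_of_apply_e hc measurableSet_Ici,
        mapsTo_vanishOn_of_apply_e hc measurableSet_Ici.compl⟩⟩
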